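/- arXiv:2211.09924 — 8 statements merged into one kernel-verified Lean document; each statement's English description precedes it below -/
import Mathlib

section
/- Let P be an n×n real positive definite matrix, B an n×m real matrix with B ≠ 0, C a p×n real matrix satisfying C·B = 0, and R an m×m invertible real matrix. Then there exists no m×p real matrix F such that R·F·C + Bᵀ·P = 0; equivalently, the state feedback gain K = -R⁻¹BᵀP cannot be factored in the form K = F·C. -/
open Matrix

lemma aux_no_F {n m p : ℕ}
    (P : Matrix (Fin n) (Fin n) ℝ) (B : Matrix (Fin n) (Fin m) ℝ)
    (C : Matrix (Fin p) (Fin n) ℝ) (R : Matrix (Fin m) (Fin m) ℝ)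
    (hP : P.PosDef) (hB : B ≠ 0) (hCB : C * B = 0) :
    ¬ ∃ F : Matrix (Fin m) (Fin p) ℝ, R * F * C + Bᵀ * P = 0 := by
  rintro ⟨F, hF⟩
  have h1 : (R * F * C + Bᵀ * P) * B = 0 := by rw [hF]; simp
  have h2 : Bᵀ * P * B = 0 := by
    simp only [Matrix.add_mul, Matrix.mul_assoc, hCB, Matrix.mul_zero, zero_add] at h1
    rw [← Matrix.mul_assoc] at h1
    exact h1
  -- get a nonzero column of B
  obtain ⟨i, j, hij⟩ : ∃ i j, B i j ≠ 0 := by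
    by_contra h
    push_neg at h
    exact hB (by ext i j; exact h i j)
  set b : Fin n → ℝ := fun i => B i j with hb
  have hbne : b ≠ 0 := fun h => hij (by simpa [hb] using congrFun h i)
  have hpos : 0 < b ⬝ᵥ P *ᵥ b := by simpa using hP.dotProduct_mulVec_pos hbne
  have hzero : (Bᵀ * P * B) j j = b ⬝ᵥ P *ᵥ b := by
    simp [Matrix.mul_apply, dotProduct, Matrix.mulVec, Finset.mul_sum,
      Finset.sum_mul, hb, mul_comm, mul_left_comm]
    rw [Finset.sum_comm]
    congr 1; ext x; congr 1; ext y; ring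
  rw [h2] at hzero
  simp at hzero
  rw [← hzero] at hpos
  exact lt_irrefl 0 hpos

/-- **Lemma 1 of the paper.** If `P` is positive definite, `B ≠ 0`, `C * B = 0` and `R` is
invertible, then there is no `F` with `R * F * C + Bᵀ * P = 0`; equivalently the LQR gain
`K = -R⁻¹ * Bᵀ * P` cannot be factored as `K = F * C`. -/
theorem lqr_gain_no_output_feedback_structure {n m p : ℕ}
    (P : Matrix (Fin n) (Fin n) ℝ) (B : Matrix (Fin n) (Fin m) ℝ)
    (C : Matrix (Fin p) (Fin n) ℝ) (R : Matrix (Fin m) (Fin m) ℝ)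
    (hP : P.PosDef) (hB : B ≠ 0) (hCB : C * B = 0) (hR : IsUnit R) :
    (¬ ∃ F : Matrix (Fin m) (Fin p) ℝ, R * F * C + Bᵀ * P = 0) ∧
      (¬ ∃ F : Matrix (Fin m) (Fin p) ℝ, -(R⁻¹ * (Bᵀ * P)) = F * C) := by
  refine ⟨aux_no_F P B C R hP hB hCB, ?_⟩
  rintro ⟨F, hF⟩
  apply aux_no_F P B C R hP hB hCB
  refine ⟨F, ?_⟩
  have hRinv : R * R⁻¹ = 1 := Matrix.mul_nonsing_inv R (isUnit_iff_isUnit_det R |>.mp hR)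
  have := congrArg (fun M => R * M) hF
  simp only [Matrix.mul_neg, ← Matrix.mul_assoc, hRinv, Matrix.one_mul] at this
  rw [← this, neg_add_cancel]
end

section
/- Let A, P be n×n real matrices with P positive definite, B an n×m real matrix, C a p×n real matrix, D a p×m real matrix, F an m×p real matrix, and R an m×m real positive definite matrix. Suppose P satisfies the Riccati equation -AᵀP - PA + PBR⁻¹BᵀP = Q, and suppose the block matrix [[Q - PBFC - CᵀFᵀBᵀP + N, PB̄], [B̄ᵀP, R]] is positive definite, where N = PB(FDR⁻¹ + R⁻¹DᵀFᵀ)BᵀP and B̄ = B(I + FD). Then for every pair of vectors (x, w) ∈ ℝⁿ × ℝᵐ with (x, w) ≠ (0, 0), the strict dissipation inequality 2·xᵀP(Ax + BFCx + BFDw) < wᵀRw holds. -/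
open Matrix

private lemma dp_swap {m n : ℕ} (M : Matrix (Fin n) (Fin m) ℝ) (a : Fin n → ℝ) (b : Fin m → ℝ) :
    a ⬝ᵥ M *ᵥ b = b ⬝ᵥ Mᵀ *ᵥ a := by
  rw [dotProduct_mulVec, ← mulVec_transpose, dotProduct_comm]

private lemma dp_left {m n : ℕ} (M : Matrix (Fin n) (Fin m) ℝ) (a : Fin m → ℝ) (y : Fin n → ℝ) :
    (M *ᵥ a) ⬝ᵥ y = a ⬝ᵥ Mᵀ *ᵥ y := by
  rw [dotProduct_comm, dp_swap]

/-- **Dissipativity conclusion of Theorem 2 (sufficiency).** If `P > 0` solves the Riccati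
equation and the paper's LMI holds, then the closed-loop system is quadratically dissipative
with storage function `xᵀPx` and supply rate `wᵀRw`: for all `(x, w) ≠ (0, 0)`,
`2 xᵀ P (A x + BFC x + BFD w) < wᵀ R w`. -/
theorem sof_lmi_implies_strict_dissipation {n m p : ℕ}
    (A P : Matrix (Fin n) (Fin n) ℝ) (B : Matrix (Fin n) (Fin m) ℝ)
    (C : Matrix (Fin p) (Fin n) ℝ) (D : Matrix (Fin p) (Fin m) ℝ)
    (F : Matrix (Fin m) (Fin p) ℝ) (R : Matrix (Fin m) (Fin m) ℝ)
    (Q : Matrix (Fin n) (Fin n) ℝ)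
    (hP : P.PosDef) (hR : R.PosDef)
    (hRiccati : -(Aᵀ * P) - P * A + P * B * R⁻¹ * Bᵀ * P = Q)
    (hLMI : (Matrix.fromBlocks
        (Q - P * B * F * C - Cᵀ * Fᵀ * Bᵀ * P +
          P * B * (F * D * R⁻¹ + R⁻¹ * Dᵀ * Fᵀ) * Bᵀ * P)
        (P * (B * (1 + F * D))) ((B * (1 + F * D))ᵀ * P) R).PosDef) :
    ∀ (x : Fin n → ℝ) (w : Fin m → ℝ), ¬(x = 0 ∧ w = 0) →
      2 * (x ⬝ᵥ P *ᵥ (A *ᵥ x + (B * F * C) *ᵥ x + (B * F * D) *ᵥ w)) < w ⬝ᵥ R *ᵥ w := by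
  have hPt : Pᵀ = P := hP.1
  have hRt : Rᵀ = R := hR.1
  have hRinv : R * R⁻¹ = 1 := Matrix.mul_nonsing_inv R hR.det_pos.ne'.isUnit
  have hRinv' : R⁻¹ * R = 1 := Matrix.nonsing_inv_mul R hR.det_pos.ne'.isUnit
  have hRit : (R⁻¹)ᵀ = R⁻¹ := by rw [Matrix.transpose_nonsing_inv, hRt]
  intro x w hxw
  set z : Fin n ⊕ Fin m → ℝ := Sum.elim x (-(w + (R⁻¹ * Bᵀ * P) *ᵥ x)) with hzdef
  have hzne : z ≠ 0 := by
    by_cases hx : x = 0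
    · have hw : w ≠ 0 := fun hw => hxw ⟨hx, hw⟩
      intro hz0
      apply hw
      ext i
      have := congrFun hz0 (Sum.inr i)
      simp [hzdef, hx] at this
      simpa using this
    · intro hz0
      apply hx
      ext i
      have := congrFun hz0 (Sum.inl i)
      simpa [hzdef] using this
  have hpos := hLMI.dotProduct_mulVec_pos hzne
  have key : z ⬝ᵥ (Matrix.fromBlocks
        (Q - P * B * F * C - Cᵀ * Fᵀ * Bᵀ * P +
          P * B * (F * D * R⁻¹ + R⁻¹ * Dᵀ * Fᵀ) * Bᵀ * P)
        (P * (B * (1 + F * D))) ((B * (1 + F * D))ᵀ * P) R) *ᵥ z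
      = w ⬝ᵥ R *ᵥ w - 2 * (x ⬝ᵥ P *ᵥ (A *ᵥ x + (B * F * C) *ᵥ x + (B * F * D) *ᵥ w)) := by
    rw [hzdef, fromBlocks_mulVec, sumElim_dotProduct_sumElim, ← hRiccati]
    simp only [Sum.elim_comp_inl, Sum.elim_comp_inr, dp_left,
      Matrix.add_mulVec, Matrix.sub_mulVec, Matrix.neg_mulVec, Matrix.mulVec_add,
      Matrix.mulVec_neg, Matrix.mulVec_sub, dotProduct_add, dotProduct_sub, dotProduct_neg,
      neg_dotProduct, add_dotProduct, sub_dotProduct, Matrix.mulVec_mulVec,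
      Matrix.mul_add, Matrix.add_mul, Matrix.mul_one, Matrix.one_mul, hPt, hRt, hRit,
      Matrix.transpose_add, Matrix.transpose_mul, Matrix.transpose_transpose, Matrix.mul_assoc]
    have hc : R * (R⁻¹ * (Bᵀ * P)) = Bᵀ * P := by
      rw [← Matrix.mul_assoc, hRinv, Matrix.one_mul]
    rw [hc, dp_swap (Aᵀ * P) x x, dp_swap (Cᵀ * (Fᵀ * (Bᵀ * P))) x x,
      dp_swap (Bᵀ * P) w x, dp_swap (Dᵀ * (Fᵀ * (Bᵀ * P))) w x]
    simp only [Matrix.transpose_mul, Matrix.transpose_transpose, hPt, hRit, Matrix.mul_assoc,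
      hRinv', Matrix.mul_one]
    ring
  have hpos' : 0 < w ⬝ᵥ R *ᵥ w -
      2 * (x ⬝ᵥ P *ᵥ (A *ᵥ x + (B * F * C) *ᵥ x + (B * F * D) *ᵥ w)) := by
    rw [← key]
    simpa using hpos
  linarith
end

section
/- Let A, P be n×n real matrices with P positive definite, B an n×m real matrix, C a p×n real matrix, D a p×m real matrix, F an m×p real matrix, and R an m×m real positive definite matrix. Suppose P satisfies the Riccati equation -AᵀP - PA + PBR⁻¹BᵀP = Q and that the block matrix [[Q - PBFC - CᵀFᵀBᵀP + N, PB̄], [B̄ᵀP, R]] is positive definite, where N = PB(FDR⁻¹ + R⁻¹DᵀFᵀ)BᵀP and B̄ = B(I + FD). Then (A + BFC)ᵀP + P(A + BFC) < 0, and hence A + BFC is Hurwitz: every eigenvalue of A + BFC has negative real part. -/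
open Matrix

lemma sof_re_star_dot {n : ℕ} (X : Matrix (Fin n) (Fin n) ℝ) (v : Fin n → ℂ) :
    (star v ⬝ᵥ (X.map (algebraMap ℝ ℂ)) *ᵥ v).re =
      (fun i => (v i).re) ⬝ᵥ X *ᵥ (fun i => (v i).re) +
      (fun i => (v i).im) ⬝ᵥ X *ᵥ (fun i => (v i).im) := by
  simp only [dotProduct, mulVec, Pi.star_apply, Matrix.map_apply, Complex.re_sum,
    Complex.mul_re, Complex.mul_im, Complex.im_sum, RCLike.star_def, Complex.conj_re,
    Complex.conj_im, Complex.ofReal_re, Complex.ofReal_im, Complex.coe_algebraMap,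
    Finset.mul_sum, Finset.sum_mul]
  rw [← Finset.sum_add_distrib]
  refine Finset.sum_congr rfl fun i _ => ?_
  rw [← Finset.sum_add_distrib]
  refine Finset.sum_congr rfl fun j _ => ?_
  ring

lemma sof_posDef_map_re {n : ℕ} {X : Matrix (Fin n) (Fin n) ℝ} (hX : X.PosDef)
    {v : Fin n → ℂ} (hv : v ≠ 0) :
    0 < (star v ⬝ᵥ (X.map (algebraMap ℝ ℂ)) *ᵥ v).re := by
  rw [sof_re_star_dot]
  by_cases ha : (fun i => (v i).re) = 0
  · have hb : (fun i => (v i).im) ≠ 0 := by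
      intro hb
      apply hv
      funext i
      exact Complex.ext (congrFun ha i) (congrFun hb i)
    have h1 := hX.dotProduct_mulVec_pos hb
    have h2 := hX.posSemidef.dotProduct_mulVec_nonneg (fun i => (v i).re)
    simp only [star_trivial] at h1 h2
    linarith
  · have h1 := hX.dotProduct_mulVec_pos ha
    have h2 := hX.posSemidef.dotProduct_mulVec_nonneg (fun i => (v i).im)
    simp only [star_trivial] at h1 h2
    linarith

lemma sof_lyapunov {n : ℕ} (M P : Matrix (Fin n) (Fin n) ℝ) (hP : P.PosDef)
    (hS : (-(Mᵀ * P + P * M)).PosDef) :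
    ∀ μ ∈ spectrum ℂ (M.map (algebraMap ℝ ℂ)), μ.re < 0 := by
  intro μ hμ
  set Mc := M.map (algebraMap ℝ ℂ) with hMc
  set Pc := P.map (algebraMap ℝ ℂ) with hPc
  rw [spectrum.mem_iff] at hμ
  have hdet : ((algebraMap ℂ (Matrix (Fin n) (Fin n) ℂ)) μ - Mc).det = 0 := by
    by_contra h
    exact hμ ((Matrix.isUnit_iff_isUnit_det _).mpr (isUnit_iff_ne_zero.mpr h))
  obtain ⟨v, hv0, hv⟩ := (Matrix.exists_mulVec_eq_zero_iff).mpr hdet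
  have heig : Mc *ᵥ v = μ • v := by
    rw [sub_mulVec, Algebra.algebraMap_eq_smul_one, smul_mulVec, one_mulVec,
      sub_eq_zero] at hv
    exact hv.symm
  have hMH : Mcᴴ = Mcᵀ := by
    ext i j
    simp [hMc, conjTranspose_apply, Complex.conj_ofReal]
  set q := star v ⬝ᵥ Pc *ᵥ v with hq
  have hmap : (-(Mᵀ * P + P * M)).map (algebraMap ℝ ℂ) = -(Mcᵀ * Pc + Pc * Mc) := by
    ext i j
    simp [hMc, hPc, Matrix.mul_apply, Matrix.map_apply, Matrix.transpose_apply]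
  have key : star v ⬝ᵥ ((-(Mᵀ * P + P * M)).map (algebraMap ℝ ℂ)) *ᵥ v
      = -((starRingEnd ℂ) μ + μ) * q := by
    rw [hmap]
    have t1 : star v ⬝ᵥ (Mcᵀ * Pc) *ᵥ v = (starRingEnd ℂ) μ * q := by
      rw [← hMH, ← mulVec_mulVec, dotProduct_mulVec _ Mcᴴ, ← star_mulVec, heig, star_smul,
        smul_dotProduct, hq]
      simp [dotProduct_mulVec]
    have t2 : star v ⬝ᵥ (Pc * Mc) *ᵥ v = μ * q := by
      rw [← mulVec_mulVec, heig, mulVec_smul, dotProduct_smul, hq]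
      simp
    rw [neg_mulVec, dotProduct_neg, add_mulVec, dotProduct_add, t1, t2]
    ring
  have hpos := sof_posDef_map_re hS hv0
  rw [key] at hpos
  have hq_re := sof_posDef_map_re hP hv0
  rw [← hPc, ← hq] at hq_re
  have hre : -((starRingEnd ℂ) μ + μ) = ((-(2 * μ.re) : ℝ) : ℂ) := by
    rw [add_comm, Complex.add_conj]
    push_cast
    ring
  rw [hre] at hpos
  rw [Complex.re_ofReal_mul] at hpos
  nlinarith

/-- **Stability conclusion of Theorem 2.** If `P > 0` solves the Riccati equation and the paper's
LMI holds, then `(A + BFC)ᵀP + P(A + BFC) < 0` and `A + BFC` is Hurwitz. -/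
theorem sof_lmi_implies_stability {n m p : ℕ}
    (A P : Matrix (Fin n) (Fin n) ℝ) (B : Matrix (Fin n) (Fin m) ℝ)
    (C : Matrix (Fin p) (Fin n) ℝ) (D : Matrix (Fin p) (Fin m) ℝ)
    (F : Matrix (Fin m) (Fin p) ℝ) (R : Matrix (Fin m) (Fin m) ℝ)
    (Q : Matrix (Fin n) (Fin n) ℝ)
    (hP : P.PosDef) (hR : R.PosDef)
    (hRiccati : -(Aᵀ * P) - P * A + P * B * R⁻¹ * Bᵀ * P = Q)
    (hLMI : (Matrix.fromBlocks
        (Q - P * B * F * C - Cᵀ * Fᵀ * Bᵀ * P +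
          P * B * (F * D * R⁻¹ + R⁻¹ * Dᵀ * Fᵀ) * Bᵀ * P)
        (P * (B * (1 + F * D))) ((B * (1 + F * D))ᵀ * P) R).PosDef) :
    (-((A + B * F * C)ᵀ * P + P * (A + B * F * C))).PosDef ∧
      ∀ μ ∈ spectrum ℂ ((A + B * F * C).map (algebraMap ℝ ℂ)), μ.re < 0 := by
  haveI : Invertible R := hR.isUnit.invertible
  have hPt : Pᵀ = P := by
    ext i j; simpa using congrFun (congrFun hP.1 i) j
  have hRt : Rᵀ = R := by
    ext i j; simpa using congrFun (congrFun hR.1 i) j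
  have hRit : (R⁻¹)ᵀ = R⁻¹ := by rw [transpose_nonsing_inv, hRt]
  set Bb := B * (1 + F * D) with hBb
  set M11 := Q - P * B * F * C - Cᵀ * Fᵀ * Bᵀ * P +
      P * B * (F * D * R⁻¹ + R⁻¹ * Dᵀ * Fᵀ) * Bᵀ * P with hM11
  have hconj : Bbᵀ * P = (P * Bb)ᴴ := by
    rw [conjTranspose_eq_transpose_of_trivial, show (P * Bb)ᵀ = Bbᵀ * Pᵀ from transpose_mul P Bb,
      hPt]
  rw [hconj] at hLMI
  set S := M11 - P * Bb * R⁻¹ * (P * Bb)ᴴ with hS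
  have hSPD : S.PosDef := by
    refine PosDef.of_dotProduct_mulVec_pos ?_ ?_
    · exact ((isHermitian_fromBlocks_iff.mp hLMI.1).1).sub
        (isHermitian_mul_mul_conjTranspose (P * Bb) hR.inv.1)
    · intro x hx
      set y := -((R⁻¹ * (P * Bb)ᴴ) *ᵥ x) with hy
      have hz : (x ⊕ᵥ y) ≠ 0 := by
        intro h
        exact hx (funext fun i => congrFun h (Sum.inl i))
      have h := hLMI.dotProduct_mulVec_pos hz
      rw [dotProduct_mulVec,
        schur_complement_eq₂₂ M11 (P * Bb) x y hR.1] at h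
      have h0 : (R⁻¹ * (P * Bb)ᴴ) *ᵥ x + y = 0 := by
        rw [hy]; ring
      rw [h0, ← hS] at h
      simpa [dotProduct_mulVec] using h
  have key : -((A + B * F * C)ᵀ * P + P * (A + B * F * C)) =
      S + P * B * (F * D) * R⁻¹ * (P * B * (F * D))ᴴ := by
    rw [hS, hM11, ← hRiccati, hBb]
    rw [conjTranspose_eq_transpose_of_trivial, conjTranspose_eq_transpose_of_trivial]
    simp only [transpose_mul, transpose_add, transpose_one, hPt, hRit]
    simp only [Matrix.mul_add, Matrix.add_mul, Matrix.mul_one, Matrix.one_mul, Matrix.mul_assoc]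
    noncomm_ring
  have hpsd : (P * B * (F * D) * R⁻¹ * (P * B * (F * D))ᴴ).PosSemidef :=
    (hR.inv.posSemidef).mul_mul_conjTranspose_same (P * B * (F * D))
  have h1 : (-((A + B * F * C)ᵀ * P + P * (A + B * F * C))).PosDef := by
    rw [key]; exact hSPD.add_posSemidef hpsd
  exact ⟨h1, sof_lyapunov (A + B * F * C) P hP h1⟩
end

section
/- Let A, P be n×n real matrices with P positive definite, B an n×m real matrix, C a p×n real matrix, D a p×m real matrix, F an m×p real matrix, and R an m×m real positive definite matrix. Suppose the block matrix [[(A + BFC)ᵀP + P(A + BFC), PBFD], [DᵀFᵀBᵀP, -R]] is negative definite. Define Q = -AᵀP - PA + PBR⁻¹BᵀP, N = PB(FDR⁻¹ + R⁻¹DᵀFᵀ)BᵀP, and B̄ = B(I + FD). Then the block matrix [[Q - PBFC - CᵀFᵀBᵀP + N, PB̄], [B̄ᵀP, R]] is positive definite. -/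
open Matrix

lemma posDef_conj_of_isUnit {k : Type*} [Fintype k] [DecidableEq k]
    {M J : Matrix k k ℝ} (hM : M.PosDef) (hJ : IsUnit J) : (Jᵀ * M * J).PosDef := by
  rw [Matrix.posDef_iff_dotProduct_mulVec]
  constructor
  · have := Matrix.isHermitian_conjTranspose_mul_mul J hM.1
    simpa [Matrix.conjTranspose_eq_transpose_of_trivial] using this
  · intro x hx
    have hJx : J *ᵥ x ≠ 0 := by
      have := Matrix.mulVec_injective_iff_isUnit.2 hJ
      intro h
      exact hx (by simpa using this (a₁ := x) (a₂ := 0) (by simpa using h))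
    have := hM.dotProduct_mulVec_pos hJx
    simpa [← Matrix.mulVec_mulVec, Matrix.dotProduct_mulVec, Matrix.vecMul_transpose,
      Matrix.dotProduct_mulVec] using this


/-- **Converse part of Theorem 2.** If the closed-loop dissipation block matrix
`[[(A+BFC)ᵀP + P(A+BFC), PBFD], [DᵀFᵀBᵀP, -R]]` is negative definite, then with `Q` defined by
the Riccati equation for this `P` and `R`, the paper's LMI block matrix is positive definite. -/
theorem dissipation_block_negdef_implies_sof_lmi {n m p : ℕ}
    (A P : Matrix (Fin n) (Fin n) ℝ) (B : Matrix (Fin n) (Fin m) ℝ)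
    (C : Matrix (Fin p) (Fin n) ℝ) (D : Matrix (Fin p) (Fin m) ℝ)
    (F : Matrix (Fin m) (Fin p) ℝ) (R : Matrix (Fin m) (Fin m) ℝ)
    (hP : P.PosDef) (hR : R.PosDef)
    (hNeg : (-(Matrix.fromBlocks ((A + B * F * C)ᵀ * P + P * (A + B * F * C))
        (P * B * F * D) (Dᵀ * Fᵀ * Bᵀ * P) (-R))).PosDef) :
    let Q : Matrix (Fin n) (Fin n) ℝ := -(Aᵀ * P) - P * A + P * B * R⁻¹ * Bᵀ * P
    let N : Matrix (Fin n) (Fin n) ℝ := P * B * (F * D * R⁻¹ + R⁻¹ * Dᵀ * Fᵀ) * Bᵀ * P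
    let Bb : Matrix (Fin n) (Fin m) ℝ := B * (1 + F * D)
    (Matrix.fromBlocks (Q - P * B * F * C - Cᵀ * Fᵀ * Bᵀ * P + N)
      (P * Bb) (Bbᵀ * P) R).PosDef := by
  intro Q N Bb
  have hRdet : IsUnit R.det := (Matrix.isUnit_iff_isUnit_det R).1 hR.isUnit
  have hPt : Pᵀ = P := by
    simpa [Matrix.conjTranspose_eq_transpose_of_trivial] using hP.1.eq
  have hRt : Rᵀ = R := by
    simpa [Matrix.conjTranspose_eq_transpose_of_trivial] using hR.1.eq
  have hRit : (R⁻¹)ᵀ = R⁻¹ := by rw [Matrix.transpose_nonsing_inv, hRt]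
  have h1 : R⁻¹ * R = 1 := Matrix.nonsing_inv_mul R hRdet
  have h2 : R * R⁻¹ = 1 := Matrix.mul_nonsing_inv R hRdet
  have c1 : ∀ (k : ℕ) (X : Matrix (Fin m) (Fin k) ℝ), R * (R⁻¹ * X) = X := by
    intro k X; rw [← Matrix.mul_assoc, h2, Matrix.one_mul]
  have c2 : ∀ (k : ℕ) (X : Matrix (Fin m) (Fin k) ℝ), R⁻¹ * (R * X) = X := by
    intro k X; rw [← Matrix.mul_assoc, h1, Matrix.one_mul]
  set J : Matrix (Fin n ⊕ Fin m) (Fin n ⊕ Fin m) ℝ :=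
    Matrix.fromBlocks 1 0 (-(R⁻¹ * Bᵀ * P)) (-1) with hJdef
  have hJ : IsUnit J := by
    rw [Matrix.isUnit_iff_isUnit_det, hJdef, Matrix.det_fromBlocks_zero₁₂]
    simp [Matrix.det_one, Matrix.det_neg]
  have key : (Matrix.fromBlocks (Q - P * B * F * C - Cᵀ * Fᵀ * Bᵀ * P + N)
      (P * Bb) (Bbᵀ * P) R) =
      Jᵀ * (-(Matrix.fromBlocks ((A + B * F * C)ᵀ * P + P * (A + B * F * C))
        (P * B * F * D) (Dᵀ * Fᵀ * Bᵀ * P) (-R))) * J := by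
    rw [hJdef]
    simp only [Matrix.fromBlocks_transpose, Matrix.transpose_one, Matrix.transpose_zero,
      Matrix.transpose_neg, Matrix.fromBlocks_neg, Matrix.fromBlocks_multiply,
      Matrix.transpose_mul, hPt, hRit, Q, N, Bb]
    rw [Matrix.fromBlocks_inj]
    refine ⟨?_, ?_, ?_, ?_⟩ <;>
    · simp only [Matrix.transpose_mul, Matrix.transpose_add, Matrix.transpose_one, hPt, hRit,
        Matrix.mul_add, Matrix.add_mul, Matrix.mul_sub, Matrix.sub_mul, Matrix.neg_mul,
        Matrix.mul_neg, Matrix.mul_one, Matrix.one_mul, Matrix.mul_zero, Matrix.zero_mul,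
        Matrix.mul_assoc, Matrix.transpose_transpose, c1, c2, h1, h2, Matrix.mul_one,
        neg_neg, neg_add, neg_sub, add_zero, zero_add]
      try abel
  rw [key]
  exact posDef_conj_of_isUnit hNeg hJ
end

section
/- Let A, P be n×n real matrices with P positive definite, B an n×m real matrix, Q an n×n real positive definite matrix, and R an m×m real positive definite matrix. Suppose P satisfies the Riccati equation -AᵀP - PA + PBR⁻¹BᵀP = Q, and set F = -R⁻¹BᵀP. Then the block matrix [[Q - PBF - FᵀBᵀP, PB], [BᵀP, R]] (equivalently, [[Q + 2·PBR⁻¹BᵀP, PB], [BᵀP, R]]) is positive definite. -/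
open Matrix

private lemma posDef_conj_of_isUnit_s10 {k : Type*} [Fintype k] [DecidableEq k]
    {N U : Matrix k k ℝ} (hN : N.PosDef) (hU : IsUnit U) : (Uᴴ * N * U).PosDef := by
  refine PosDef.of_dotProduct_mulVec_pos (isHermitian_conjTranspose_mul_mul U hN.1) fun x hx => ?_
  have hUx : U *ᵥ x ≠ 0 := by
    have hinj := Matrix.mulVec_injective_iff_isUnit.mpr hU
    intro h
    exact hx (hinj (by simpa using h))
  simpa only [star_mulVec, dotProduct_mulVec, vecMul_vecMul] using hN.dotProduct_mulVec_pos hUx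

private lemma posDef_fromBlocks_diag {k l : Type*} [Fintype k] [Fintype l]
    [DecidableEq k] [DecidableEq l]
    {M : Matrix k k ℝ} {N : Matrix l l ℝ} (hM : M.PosDef) (hN : N.PosDef) :
    (fromBlocks M 0 0 N).PosDef := by
  refine PosDef.of_dotProduct_mulVec_pos (isHermitian_fromBlocks_iff.mpr ⟨hM.1, by simp, by simp, hN.1⟩) fun x hx => ?_
  have hq : star x ⬝ᵥ (fromBlocks M 0 0 N) *ᵥ x =
      star (x ∘ Sum.inl) ⬝ᵥ M *ᵥ (x ∘ Sum.inl) + star (x ∘ Sum.inr) ⬝ᵥ N *ᵥ (x ∘ Sum.inr) := by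
    rw [fromBlocks_mulVec]
    simp [dotProduct, Fintype.sum_sum_type, Function.comp]
  rw [hq]
  by_cases h1 : x ∘ Sum.inl = 0
  · have h2 : x ∘ Sum.inr ≠ 0 := by
      intro h2
      apply hx
      ext i
      cases i with
      | inl i => exact congrFun h1 i
      | inr i => exact congrFun h2 i
    exact add_pos_of_nonneg_of_pos (hM.posSemidef.dotProduct_mulVec_nonneg _) (hN.dotProduct_mulVec_pos h2)
  · exact add_pos_of_pos_of_nonneg (hM.dotProduct_mulVec_pos h1) (hN.posSemidef.dotProduct_mulVec_nonneg _)

/-- **Corollary of Theorem 2.** When the full state is measured (`C = I`) and there is no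
feedthrough (`D = 0`), the LQR gain `F = -R⁻¹BᵀP`, with `P > 0` the solution of the Riccati
equation, satisfies the paper's LMI: the block matrix `[[Q - PBF - FᵀBᵀP, PB], [BᵀP, R]]`
(which equals `[[Q + 2 PBR⁻¹BᵀP, PB], [BᵀP, R]]`) is positive definite. -/
theorem lqr_gain_satisfies_sof_lmi {n m : ℕ}
    (A P : Matrix (Fin n) (Fin n) ℝ) (B : Matrix (Fin n) (Fin m) ℝ)
    (Q : Matrix (Fin n) (Fin n) ℝ) (R : Matrix (Fin m) (Fin m) ℝ)
    (F : Matrix (Fin m) (Fin n) ℝ)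
    (hP : P.PosDef) (hQ : Q.PosDef) (hR : R.PosDef)
    (hRiccati : -(Aᵀ * P) - P * A + P * B * R⁻¹ * Bᵀ * P = Q)
    (hF : F = -(R⁻¹ * Bᵀ * P)) :
    (Matrix.fromBlocks (Q - P * B * F - Fᵀ * Bᵀ * P) (P * B) (Bᵀ * P) R).PosDef ∧
      Q - P * B * F - Fᵀ * Bᵀ * P = Q + 2 • (P * B * R⁻¹ * Bᵀ * P) := by
  have hPt : Pᵀ = P := by
    have h : Pᴴ = P := hP.1
    rwa [Matrix.conjTranspose_eq_transpose_of_trivial] at h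
  have hRt : Rᵀ = R := by
    have h : Rᴴ = R := hR.1
    rwa [Matrix.conjTranspose_eq_transpose_of_trivial] at h
  have hRinvT : (R⁻¹)ᵀ = R⁻¹ := by
    rw [Matrix.transpose_nonsing_inv, hRt]
  set S : Matrix (Fin n) (Fin n) ℝ := P * B * R⁻¹ * Bᵀ * P with hSdef
  have hFt : Fᵀ = -(P * B * R⁻¹) := by
    rw [hF]
    simp [Matrix.transpose_mul, hPt, hRinvT, Matrix.mul_assoc]
  have hEq : Q - P * B * F - Fᵀ * Bᵀ * P = Q + 2 • S := by
    rw [hFt, hF, hSdef, two_smul]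
    simp only [Matrix.mul_neg, Matrix.neg_mul, sub_neg_eq_add, Matrix.mul_assoc]
    abel
  refine ⟨?_, hEq⟩
  haveI : Invertible R := hR.isUnit.invertible
  have hinvOf : ⅟R = R⁻¹ := invOf_eq_nonsing_inv R
  have hS : S.PosSemidef := by
    have h := hR.inv.posSemidef.conjTranspose_mul_mul_same (Bᵀ * P)
    have hconv : (Bᵀ * P)ᴴ * R⁻¹ * (Bᵀ * P) = S := by
      rw [Matrix.conjTranspose_eq_transpose_of_trivial, Matrix.transpose_mul, hPt,
        Matrix.transpose_transpose, hSdef]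
      simp only [Matrix.mul_assoc]
    rwa [hconv] at h
  have hSchurEq : Q - P * B * F - Fᵀ * Bᵀ * P - P * B * ⅟R * (Bᵀ * P) = Q + S := by
    rw [hEq, hinvOf, two_smul, hSdef]
    simp only [Matrix.mul_assoc]
    abel
  have hMid : (fromBlocks (Q + S) (0 : Matrix (Fin n) (Fin m) ℝ)
      (0 : Matrix (Fin m) (Fin n) ℝ) R).PosDef :=
    posDef_fromBlocks_diag (hQ.add_posSemidef hS) hR
  set U : Matrix (Fin n ⊕ Fin m) (Fin n ⊕ Fin m) ℝ :=
    fromBlocks 1 0 (⅟R * (Bᵀ * P)) 1 with hUdef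
  have hUunit : IsUnit U := by
    rw [Matrix.isUnit_iff_isUnit_det, hUdef, Matrix.det_fromBlocks_zero₁₂]
    simp
  have hUH : Uᴴ = fromBlocks 1 (P * B * ⅟R) 0 1 := by
    rw [hUdef, fromBlocks_conjTranspose]
    congr 1 <;> try simp
    · simp only [Matrix.conjTranspose_eq_transpose_of_trivial, Matrix.transpose_mul,
        Matrix.transpose_transpose, hPt, hinvOf, hRinvT, Matrix.mul_assoc]
  have hdecomp := Matrix.fromBlocks_eq_of_invertible₂₂
    (Q - P * B * F - Fᵀ * Bᵀ * P) (P * B) (Bᵀ * P) R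
  rw [hdecomp, hSchurEq, ← hUH, ← hUdef]
  exact posDef_conj_of_isUnit_s10 hMid hUunit
end

section
/- Let A, P be n×n real matrices with P positive definite, B an n×m real matrix, Q an n×n real positive definite matrix, and R an m×m real positive definite matrix. Suppose P satisfies the Riccati equation -AᵀP - PA + PBR⁻¹BᵀP = Q, and set F = -R⁻¹BᵀP. Then (A + BF)ᵀP + P(A + BF) = -(Q + PBR⁻¹BᵀP) < 0, and consequently A + BF is Hurwitz: every eigenvalue of A + BF has negative real part. -/
open Matrix

lemma cdot_map_posdef {n : ℕ} {P : Matrix (Fin n) (Fin n) ℝ} (hP : P.PosDef)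
    {x : Fin n → ℂ} (hx : x ≠ 0) :
    0 < (star x ⬝ᵥ (P.map (algebraMap ℝ ℂ)) *ᵥ x).re ∧
      (star x ⬝ᵥ (P.map (algebraMap ℝ ℂ)) *ᵥ x).im = 0 := by
  have hPs : ∀ i j, P i j = P j i := by
    intro i j
    conv_lhs => rw [← hP.1.eq]
    simp [conjTranspose_apply]
  have hsymm : ∀ u v : Fin n → ℝ, u ⬝ᵥ P *ᵥ v = v ⬝ᵥ P *ᵥ u := by
    intro u v
    simp only [dotProduct, mulVec, Finset.mul_sum]
    rw [Finset.sum_comm]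
    refine Finset.sum_congr rfl fun i _ => Finset.sum_congr rfl fun j _ => by
      rw [hPs i j]; ring
  have hre : (star x ⬝ᵥ (P.map (algebraMap ℝ ℂ)) *ᵥ x).re =
      (fun i => (x i).re) ⬝ᵥ P *ᵥ (fun i => (x i).re) +
      (fun i => (x i).im) ⬝ᵥ P *ᵥ (fun i => (x i).im) := by
    simp only [dotProduct, mulVec, Complex.re_sum, Pi.star_apply, RCLike.star_def, map_sum,
      Complex.mul_re, Complex.mul_im, Complex.conj_re, Complex.conj_im, map_apply,
      Complex.coe_algebraMap, Complex.ofReal_re, Complex.ofReal_im, Finset.mul_sum,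
      ← Finset.sum_add_distrib]
    refine Finset.sum_congr rfl fun i _ => Finset.sum_congr rfl fun j _ => by ring
  have him : (star x ⬝ᵥ (P.map (algebraMap ℝ ℂ)) *ᵥ x).im =
      (fun i => (x i).re) ⬝ᵥ P *ᵥ (fun i => (x i).im) -
      (fun i => (x i).im) ⬝ᵥ P *ᵥ (fun i => (x i).re) := by
    simp only [dotProduct, mulVec, Complex.im_sum, Pi.star_apply, RCLike.star_def, map_sum,
      Complex.mul_re, Complex.mul_im, Complex.conj_re, Complex.conj_im, map_apply,
      Complex.coe_algebraMap, Complex.ofReal_re, Complex.ofReal_im, Finset.mul_sum,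
      ← Finset.sum_sub_distrib]
    refine Finset.sum_congr rfl fun i _ => Finset.sum_congr rfl fun j _ => by ring
  refine ⟨?_, by rw [him, hsymm, sub_self]⟩
  rw [hre]
  have hab : (fun i => (x i).re) ≠ (0 : Fin n → ℝ) ∨ (fun i => (x i).im) ≠ (0 : Fin n → ℝ) := by
    by_contra h
    push_neg at h
    apply hx
    ext i
    exact Complex.ext (by simpa using congrFun h.1 i) (by simpa using congrFun h.2 i)
  have hsa := hP.posSemidef.dotProduct_mulVec_nonneg (fun i => (x i).re)
  have hsb := hP.posSemidef.dotProduct_mulVec_nonneg (fun i => (x i).im)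
  simp only [star_trivial, RCLike.re_to_real] at hsa hsb
  rcases hab with h | h
  · have h1 := hP.dotProduct_mulVec_pos h
    simp only [star_trivial] at h1
    linarith
  · have h1 := hP.dotProduct_mulVec_pos h
    simp only [star_trivial] at h1
    linarith

/-- **LQR stabilization.** If `P > 0` solves the Riccati equation with weights `Q > 0`, `R > 0`,
and `F = -R⁻¹BᵀP`, then `(A + BF)ᵀP + P(A + BF) = -(Q + PBR⁻¹BᵀP) < 0`, and consequently
`A + BF` is Hurwitz. -/
theorem lqr_closed_loop_lyapunov_and_hurwitz {n m : ℕ}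
    (A P : Matrix (Fin n) (Fin n) ℝ) (B : Matrix (Fin n) (Fin m) ℝ)
    (Q : Matrix (Fin n) (Fin n) ℝ) (R : Matrix (Fin m) (Fin m) ℝ)
    (F : Matrix (Fin m) (Fin n) ℝ)
    (hP : P.PosDef) (hQ : Q.PosDef) (hR : R.PosDef)
    (hRiccati : -(Aᵀ * P) - P * A + P * B * R⁻¹ * Bᵀ * P = Q)
    (hF : F = -(R⁻¹ * Bᵀ * P)) :
    (A + B * F)ᵀ * P + P * (A + B * F) = -(Q + P * B * R⁻¹ * Bᵀ * P) ∧
      (-((A + B * F)ᵀ * P + P * (A + B * F))).PosDef ∧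
      ∀ μ ∈ spectrum ℂ ((A + B * F).map (algebraMap ℝ ℂ)), μ.re < 0 := by
  have hPT : Pᵀ = P := by
    ext i j
    simpa [conjTranspose_apply] using congrFun (congrFun hP.1.eq i) j
  have hRT : Rᵀ = R := by
    ext i j
    simpa [conjTranspose_apply] using congrFun (congrFun hR.1.eq i) j
  have hFT : Fᵀ = -(P * B * R⁻¹) := by
    rw [hF]
    simp only [transpose_neg, transpose_mul, transpose_transpose, transpose_nonsing_inv, hPT, hRT]
    rw [Matrix.mul_assoc]
  have h2 : Aᵀ * P + P * A = P * B * R⁻¹ * Bᵀ * P - Q := by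
    rw [← hRiccati]; abel
  have hLyap : (A + B * F)ᵀ * P + P * (A + B * F) = -(Q + P * B * R⁻¹ * Bᵀ * P) := by
    calc (A + B * F)ᵀ * P + P * (A + B * F)
        = (Aᵀ * P + P * A) + Fᵀ * Bᵀ * P + P * B * F := by
          simp only [transpose_add, transpose_mul, add_mul, mul_add, ← Matrix.mul_assoc]; abel
      _ = (Aᵀ * P + P * A) + (-(P * B * R⁻¹)) * Bᵀ * P + P * B * (-(R⁻¹ * Bᵀ * P)) := by
          rw [hFT, hF]
      _ = -(Q + P * B * R⁻¹ * Bᵀ * P) := by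
          rw [h2]; simp only [Matrix.neg_mul, Matrix.mul_neg, ← Matrix.mul_assoc]; abel
  -- positive definiteness of Q + P B R⁻¹ Bᵀ P
  have hS : (P * B * R⁻¹ * Bᵀ * P).PosSemidef := by
    have h := (hR.inv.posSemidef).conjTranspose_mul_mul_same (Bᵀ * P)
    have hPsym : ∀ i j, P i j = P j i := fun i j => by
      conv_lhs => rw [← hPT]
      rw [transpose_apply]
    have heq : (Bᵀ * P)ᴴ * R⁻¹ * (Bᵀ * P) = P * B * R⁻¹ * Bᵀ * P := by
      have hBP : (Bᵀ * P)ᴴ = P * B := by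
        ext i j
        simp only [conjTranspose_apply, star_trivial, mul_apply, transpose_apply]
        exact Finset.sum_congr rfl fun k _ => by rw [hPsym i k]; ring
      rw [hBP, Matrix.mul_assoc (P * B), ← Matrix.mul_assoc, ← Matrix.mul_assoc]
    rwa [heq] at h
  have hQS : (Q + P * B * R⁻¹ * Bᵀ * P).PosDef := hQ.add_posSemidef hS
  refine ⟨hLyap, by rw [hLyap, neg_neg]; exact hQS, ?_⟩
  -- Hurwitz
  intro μ hμ
  set Mc := (A + B * F).map (algebraMap ℝ ℂ) with hMc
  rw [← AlgEquiv.spectrum_eq (Matrix.toLinAlgEquiv' : Matrix (Fin n) (Fin n) ℂ ≃ₐ[ℂ] _) Mc,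
    ← Module.End.hasEigenvalue_iff_mem_spectrum] at hμ
  obtain ⟨v, hv⟩ := hμ.exists_hasEigenvector
  have heig : Mc *ᵥ v = μ • v := by
    have := hv.apply_eq_smul
    rwa [Matrix.toLinAlgEquiv'_apply] at this
  have hv0 : v ≠ 0 := hv.right
  set Pc := P.map (algebraMap ℝ ℂ) with hPc
  set Sc := (Q + P * B * R⁻¹ * Bᵀ * P).map (algebraMap ℝ ℂ) with hSc
  have hmapT : ((A + B * F)ᵀ).map (algebraMap ℝ ℂ) = Mcᴴ := by
    ext i j
    simp only [map_apply, conjTranspose_apply, transpose_apply, hMc, Complex.coe_algebraMap,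
      RCLike.star_def, Complex.conj_ofReal]
  have hmapneg : (-(Q + P * B * R⁻¹ * Bᵀ * P)).map (algebraMap ℝ ℂ) = -Sc := by
    ext i j
    simp [hSc, map_apply]
  have hmap : Mcᴴ * Pc + Pc * Mc = -Sc := by
    have h := congrArg (fun M : Matrix (Fin n) (Fin n) ℝ => M.map (algebraMap ℝ ℂ)) hLyap
    rw [Matrix.map_add _ (map_add (algebraMap ℝ ℂ)), Matrix.map_mul, Matrix.map_mul, hmapT,
      hmapneg] at h
    exact h
  have key : (starRingEnd ℂ μ + μ) * (star v ⬝ᵥ Pc *ᵥ v) = -(star v ⬝ᵥ Sc *ᵥ v) := by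
    have e1 : star v ⬝ᵥ (Mcᴴ * Pc) *ᵥ v = starRingEnd ℂ μ * (star v ⬝ᵥ Pc *ᵥ v) := by
      rw [← mulVec_mulVec, dotProduct_mulVec (star v) Mcᴴ, ← star_mulVec, heig]
      simp [star_smul, vecMul_smul, smul_vecMul, smul_dotProduct, smul_eq_mul, dotProduct_mulVec]
    have e2 : star v ⬝ᵥ (Pc * Mc) *ᵥ v = μ * (star v ⬝ᵥ Pc *ᵥ v) := by
      rw [← mulVec_mulVec, heig, mulVec_smul]
      simp [dotProduct_smul]
    calc (starRingEnd ℂ μ + μ) * (star v ⬝ᵥ Pc *ᵥ v)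
        = star v ⬝ᵥ (Mcᴴ * Pc) *ᵥ v + star v ⬝ᵥ (Pc * Mc) *ᵥ v := by rw [e1, e2]; ring
      _ = star v ⬝ᵥ (Mcᴴ * Pc + Pc * Mc) *ᵥ v := by rw [add_mulVec, dotProduct_add]
      _ = -(star v ⬝ᵥ Sc *ᵥ v) := by rw [hmap, neg_mulVec, dotProduct_neg]
  have hp := cdot_map_posdef hP hv0
  have hs := cdot_map_posdef hQS hv0
  have hkey := congrArg Complex.re key
  have him0 : ((starRingEnd ℂ) μ + μ).im = 0 := by simp
  have hre2 : ((starRingEnd ℂ) μ + μ).re = 2 * μ.re := by simp; ring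
  rw [Complex.mul_re, him0, hre2, Complex.neg_re] at hkey
  nlinarith [hp.1, hs.1, hkey]
end

section
/- Let A, P be n×n real matrices with P positive definite, B an n×m real matrix, C a p×n real matrix, D a p×m real matrix, F an m×p real matrix with I - FD invertible, and R an m×m real positive definite matrix. Suppose P satisfies the Riccati equation -AᵀP - PA + PBR⁻¹BᵀP = Q, and suppose the 3×3 block matrix [[M, PB̄, CᵀFᵀ], [B̄ᵀP, R, 0], [FC, 0, R̄]] is positive definite, where M = Q - PBFC - CᵀFᵀBᵀP + N, N = PB(FDR⁻¹ + R⁻¹DᵀFᵀ)BᵀP, B̄ = B(I + FD), and R̄ = (I - FD)R⁻¹(I - DᵀFᵀ). Then, with F̄ = (I - FD)⁻¹FC, the closed-loop matrix satisfies (A + BF̄)ᵀP + P(A + BF̄) < 0, and hence A + BF̄ is Hurwitz: every eigenvalue of A + BF̄ has negative real part. -/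
open Matrix

/-- A 3×3 block matrix assembled from nine blocks. -/
def fromBlocks3 {n₁ n₂ n₃ : Type*} (A₁₁ : Matrix n₁ n₁ ℝ) (A₁₂ : Matrix n₁ n₂ ℝ)
    (A₁₃ : Matrix n₁ n₃ ℝ) (A₂₁ : Matrix n₂ n₁ ℝ) (A₂₂ : Matrix n₂ n₂ ℝ)
    (A₂₃ : Matrix n₂ n₃ ℝ) (A₃₁ : Matrix n₃ n₁ ℝ) (A₃₂ : Matrix n₃ n₂ ℝ)
    (A₃₃ : Matrix n₃ n₃ ℝ) : Matrix (n₁ ⊕ (n₂ ⊕ n₃)) (n₁ ⊕ (n₂ ⊕ n₃)) ℝ :=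
  Matrix.fromBlocks A₁₁ (Matrix.fromCols A₁₂ A₁₃) (Matrix.fromRows A₂₁ A₃₁)
    (Matrix.fromBlocks A₂₂ A₂₃ A₃₂ A₃₃)


lemma star_id_real {k : Type*} (x : k → ℝ) : star x = x := by
  funext i; simp

lemma posDef_fromBlocks_diag_s14 {k l : Type*} [Fintype k] [Fintype l] [DecidableEq k] [DecidableEq l]
    {A : Matrix k k ℝ} {D : Matrix l l ℝ} (hA : A.PosDef) (hD : D.PosDef) :
    (Matrix.fromBlocks A 0 0 D).PosDef := by
  refine Matrix.posDef_iff_dotProduct_mulVec.mpr ⟨?_, ?_⟩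
  · rw [Matrix.isHermitian_fromBlocks_iff]
    exact ⟨hA.1, by simp, by simp, hD.1⟩
  · intro x hx
    have hsplit : star x ⬝ᵥ (Matrix.fromBlocks A 0 0 D) *ᵥ x =
        star (x ∘ Sum.inl) ⬝ᵥ A *ᵥ (x ∘ Sum.inl) + star (x ∘ Sum.inr) ⬝ᵥ D *ᵥ (x ∘ Sum.inr) := by
      simp [dotProduct, Matrix.fromBlocks_mulVec, Fintype.sum_sum_type, Matrix.mulVec]
    rw [hsplit]
    by_cases h1 : x ∘ Sum.inl = 0
    · have h2 : x ∘ Sum.inr ≠ 0 := by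
        intro h2; apply hx; funext i
        cases i with
        | inl i => exact congrFun h1 i
        | inr i => exact congrFun h2 i
      exact add_pos_of_nonneg_of_pos (hA.posSemidef.dotProduct_mulVec_nonneg _) (hD.dotProduct_mulVec_pos h2)
    · exact add_pos_of_pos_of_nonneg (hA.dotProduct_mulVec_pos h1) (hD.posSemidef.dotProduct_mulVec_nonneg _)

lemma posDef_schur {k l : Type*} [Fintype k] [Fintype l] [DecidableEq k] [DecidableEq l]
    (A : Matrix k k ℝ) (B : Matrix k l ℝ) {D : Matrix l l ℝ} (hD : D.PosDef)
    (h : (Matrix.fromBlocks A B Bᵀ D).PosDef) : (A - B * D⁻¹ * Bᵀ).PosDef := by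
  have hinv : Invertible D := hD.isUnit.invertible
  have hBt : Bᵀ = Bᴴ := by ext i j; simp [Matrix.conjTranspose_apply]
  refine Matrix.posDef_iff_dotProduct_mulVec.mpr ⟨?_, ?_⟩
  · have h1 := h.1
    rw [hBt] at h1 ⊢
    exact (Matrix.IsHermitian.fromBlocks₂₂ A B hD.1).mp h1
  · intro x hx
    set y : l → ℝ := -((D⁻¹ * Bᴴ) *ᵥ x) with hy
    have hv : (Sum.elim x y) ≠ 0 := by
      intro hc; exact hx (funext fun i => congrFun hc (Sum.inl i))
    have hpos := h.dotProduct_mulVec_pos hv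
    rw [Matrix.dotProduct_mulVec, hBt] at hpos
    have hsc := Matrix.schur_complement_eq₂₂ A B x y hD.1
    rw [hsc] at hpos
    rw [hy] at hpos
    simp only [add_neg_cancel, star_zero, Matrix.zero_vecMul, zero_dotProduct,
      zero_add] at hpos
    rw [← Matrix.dotProduct_mulVec] at hpos
    rwa [hBt]


lemma re_star_dotProduct {k : Type*} [Fintype k] (S : Matrix k k ℝ) (v : k → ℂ) :
    (star v ⬝ᵥ (S.map (algebraMap ℝ ℂ)) *ᵥ v).re =
      (fun i => (v i).re) ⬝ᵥ S *ᵥ (fun i => (v i).re) +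
        (fun i => (v i).im) ⬝ᵥ S *ᵥ (fun i => (v i).im) := by
  simp only [dotProduct, Matrix.mulVec, Matrix.map_apply, Pi.star_apply,
    Complex.re_sum, Finset.mul_sum, ← Finset.sum_add_distrib]
  refine Finset.sum_congr rfl fun i _ => Finset.sum_congr rfl fun j _ => ?_
  simp [Complex.mul_re, Complex.mul_im, Complex.conj_re, Complex.conj_im]
  try ring

lemma posDef_complex_re {k : Type*} [Fintype k] {S : Matrix k k ℝ} (hS : S.PosDef)
    {v : k → ℂ} (hv : v ≠ 0) : 0 < (star v ⬝ᵥ (S.map (algebraMap ℝ ℂ)) *ᵥ v).re := by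
  rw [re_star_dotProduct]
  set a : k → ℝ := fun i => (v i).re with ha
  set b : k → ℝ := fun i => (v i).im with hb
  have hstar : ∀ x : k → ℝ, star x = x := fun x => funext fun i => by simp
  by_cases h1 : a = 0
  · have h2 : b ≠ 0 := by
      intro h2; apply hv; funext i
      have := congrFun h1 i
      have := congrFun h2 i
      simp only [ha, hb] at *
      exact Complex.ext (by assumption) (by assumption)
    have := hS.dotProduct_mulVec_pos h2
    rw [hstar] at this
    exact add_pos_of_nonneg_of_pos (by simpa [hstar] using hS.posSemidef.dotProduct_mulVec_nonneg a) this
  · have := hS.dotProduct_mulVec_pos h1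
    rw [hstar] at this
    exact add_pos_of_pos_of_nonneg this (by simpa [hstar] using hS.posSemidef.dotProduct_mulVec_nonneg b)



lemma lyapunov_hurwitz {k : Type*} [Fintype k] [DecidableEq k] {M P : Matrix k k ℝ}
    (hP : P.PosDef) (hL : (-(Mᵀ * P + P * M)).PosDef) :
    ∀ μ ∈ spectrum ℂ (M.map (algebraMap ℝ ℂ)), μ.re < 0 := by
  intro μ hμ
  set Mc := M.map (algebraMap ℝ ℂ) with hMc
  set Pc := P.map (algebraMap ℝ ℂ) with hPc
  rw [spectrum.mem_iff] at hμ
  have hdet : ((algebraMap ℂ (Matrix k k ℂ) μ) - Mc).det = 0 := by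
    by_contra h
    exact hμ ((Matrix.isUnit_iff_isUnit_det _).mpr (isUnit_iff_ne_zero.2 h))
  obtain ⟨v, hvne, hveq⟩ := (Matrix.exists_mulVec_eq_zero_iff).mpr hdet
  have hMv : Mc *ᵥ v = μ • v := by
    rw [Matrix.sub_mulVec] at hveq
    have h1 : (algebraMap ℂ (Matrix k k ℂ) μ) *ᵥ v = μ • v := by
      rw [Algebra.algebraMap_eq_smul_one, Matrix.smul_mulVec, Matrix.one_mulVec]
    rw [h1, sub_eq_zero] at hveq
    exact hveq.symm
  have hMcH : Mcᴴ = Mcᵀ := by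
    ext i j
    simp [hMc, Matrix.conjTranspose_apply, Matrix.map_apply, Complex.conj_ofReal]
  have hstarMv : Mc *ᵥ star v = star (Mc *ᵥ v) := by
    rw [Matrix.star_mulVec, hMcH, Matrix.vecMul_transpose]
  set p : ℂ := star v ⬝ᵥ Pc *ᵥ v with hp
  have hq : star v ⬝ᵥ ((-(Mᵀ * P + P * M)).map (algebraMap ℝ ℂ)) *ᵥ v
      = -((starRingEnd ℂ) μ * p + μ * p) := by
    have hmap : (-(Mᵀ * P + P * M)).map (algebraMap ℝ ℂ) = -(Mcᵀ * Pc + Pc * Mc) := by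
      ext i j
      simp [hMc, hPc, Matrix.map_apply, Matrix.mul_apply, Matrix.transpose_apply]
    rw [hmap]
    have hterm2 : star v ⬝ᵥ (Pc * Mc) *ᵥ v = μ * p := by
      rw [← Matrix.mulVec_mulVec, hMv, Matrix.mulVec_smul, dotProduct_smul, hp,
        smul_eq_mul]
    have hterm1 : star v ⬝ᵥ (Mcᵀ * Pc) *ᵥ v = (starRingEnd ℂ) μ * p := by
      rw [← Matrix.mulVec_mulVec, Matrix.dotProduct_mulVec, Matrix.vecMul_transpose, hstarMv,
        hMv, star_smul, smul_dotProduct, ← hp]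
      simp [Complex.star_def]
    rw [Matrix.neg_mulVec, dotProduct_neg, Matrix.add_mulVec, dotProduct_add,
      hterm1, hterm2]
  have hqre := posDef_complex_re hL hvne
  rw [hq] at hqre
  have hpre := posDef_complex_re hP hvne
  rw [← hPc, ← hp] at hpre
  have hconj : ((starRingEnd ℂ) μ * p + μ * p).re = 2 * μ.re * p.re := by
    have h2 : (starRingEnd ℂ) μ * p + μ * p = ((2 * μ.re : ℝ) : ℂ) * p := by
      rw [← add_mul]
      congr 1
      rw [add_comm]
      exact_mod_cast Complex.add_conj μ
    rw [h2]
    simp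
  rw [Complex.neg_re, hconj] at hqre
  nlinarith

lemma posDef_mul_mul_transpose {k : Type*} [Fintype k] [DecidableEq k]
    {M N : Matrix k k ℝ} (hM : M.PosDef) (hN : IsUnit N) : (N * M * Nᵀ).PosDef := by
  have hNH : Nᴴ = Nᵀ := by ext i j; simp [Matrix.conjTranspose_apply]
  refine Matrix.posDef_iff_dotProduct_mulVec.mpr ⟨?_, ?_⟩
  · have := (hM.posSemidef.mul_mul_conjTranspose_same N).1
    rwa [hNH] at this
  · intro x hx
    have hNt : IsUnit Nᵀ := by
      rw [Matrix.isUnit_iff_isUnit_det, Matrix.det_transpose,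
        ← Matrix.isUnit_iff_isUnit_det]
      exact hN
    have hy : Nᵀ *ᵥ x ≠ 0 := by
      have hinj := Matrix.mulVec_injective_iff_isUnit.mpr hNt
      intro hc
      exact hx (hinj (show Nᵀ *ᵥ x = Nᵀ *ᵥ 0 by simpa using hc))
    have hstar : ∀ z : k → ℝ, star z = z := fun z => funext fun i => by simp
    have key : star x ⬝ᵥ (N * M * Nᵀ) *ᵥ x = star (Nᵀ *ᵥ x) ⬝ᵥ M *ᵥ (Nᵀ *ᵥ x) := by
      rw [hstar, hstar, Matrix.mul_assoc, ← Matrix.mulVec_mulVec, Matrix.dotProduct_mulVec,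
        ← Matrix.transpose_transpose N, Matrix.vecMul_transpose, Matrix.transpose_transpose,
        ← Matrix.mulVec_mulVec]
    rw [key]
    exact hM.dotProduct_mulVec_pos hy


/-- **Sufficiency part of Theorem 3.** If `P > 0` solves the Riccati equation and the paper's
3×3 block matrix inequality holds, then with `F̄ = (I - FD)⁻¹ F C` the closed-loop matrix
satisfies `(A + BF̄)ᵀP + P(A + BF̄) < 0`, and `A + BF̄` is Hurwitz. -/
theorem feedthrough_lmi_implies_stability {n m p : ℕ}
    (A P : Matrix (Fin n) (Fin n) ℝ) (B : Matrix (Fin n) (Fin m) ℝ)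
    (C : Matrix (Fin p) (Fin n) ℝ) (D : Matrix (Fin p) (Fin m) ℝ)
    (F : Matrix (Fin m) (Fin p) ℝ) (R : Matrix (Fin m) (Fin m) ℝ)
    (Q : Matrix (Fin n) (Fin n) ℝ)
    (hP : P.PosDef) (hR : R.PosDef) (hFD : IsUnit (1 - F * D))
    (hRiccati : -(Aᵀ * P) - P * A + P * B * R⁻¹ * Bᵀ * P = Q)
    (hLMI : (fromBlocks3
        (Q - P * B * F * C - Cᵀ * Fᵀ * Bᵀ * P +
          P * B * (F * D * R⁻¹ + R⁻¹ * Dᵀ * Fᵀ) * Bᵀ * P)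
        (P * (B * (1 + F * D))) (Cᵀ * Fᵀ)
        ((B * (1 + F * D))ᵀ * P) R 0
        (F * C) 0 ((1 - F * D) * R⁻¹ * (1 - Dᵀ * Fᵀ))).PosDef) :
    let Fb : Matrix (Fin m) (Fin n) ℝ := (1 - F * D)⁻¹ * (F * C)
    (-((A + B * Fb)ᵀ * P + P * (A + B * Fb))).PosDef ∧
      ∀ μ ∈ spectrum ℂ ((A + B * Fb).map (algebraMap ℝ ℂ)), μ.re < 0 := by


  simp only [fromBlocks3] at hLMI
  intro Fb
  have hFb : Fb = (1 - F * D)⁻¹ * (F * C) := rfl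
  -- basic symmetry facts
  have hPH : Pᴴ = Pᵀ := by ext i j; simp [Matrix.conjTranspose_apply]
  have hPt : Pᵀ = P := by rw [← hPH]; exact hP.1
  have hRH : Rᴴ = Rᵀ := by ext i j; simp [Matrix.conjTranspose_apply]
  have hRt : Rᵀ = R := by rw [← hRH]; exact hR.1
  have hRdet : IsUnit R.det := (Matrix.isUnit_iff_isUnit_det R).mp hR.isUnit
  have hSdet : IsUnit (1 - F * D).det := (Matrix.isUnit_iff_isUnit_det _).mp hFD
  have hRinvT : (R⁻¹)ᵀ = R⁻¹ := by rw [Matrix.transpose_nonsing_inv, hRt]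
  -- cancellation lemmas
  have cR1 : ∀ X : Matrix (Fin m) (Fin n) ℝ, R * (R⁻¹ * X) = X := fun X => by
    rw [← Matrix.mul_assoc, Matrix.mul_nonsing_inv _ hRdet, Matrix.one_mul]
  have cR2 : ∀ X : Matrix (Fin m) (Fin n) ℝ, R⁻¹ * (R * X) = X := fun X => by
    rw [← Matrix.mul_assoc, Matrix.nonsing_inv_mul _ hRdet, Matrix.one_mul]
  have hSFb : (1 - F * D) * Fb = F * C := by
    rw [hFb, ← Matrix.mul_assoc, Matrix.mul_nonsing_inv _ hSdet, Matrix.one_mul]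
  have hFC : F * C = (1 - F * D) * Fb := hSFb.symm
  have hSt : (1 - F * D)ᵀ = 1 - Dᵀ * Fᵀ := by
    rw [Matrix.transpose_sub, Matrix.transpose_one, Matrix.transpose_mul]
  have hCFt : ∀ X : Matrix (Fin m) (Fin n) ℝ,
      Cᵀ * (Fᵀ * X) = Fbᵀ * ((1 - Dᵀ * Fᵀ) * X) := fun X => by
    simp only [← Matrix.mul_assoc]
    rw [← Matrix.transpose_mul, hFC, Matrix.transpose_mul, hSt]
  -- the lower-right block and its inverse
  set Rb : Matrix (Fin m) (Fin m) ℝ := (1 - F * D) * R⁻¹ * (1 - Dᵀ * Fᵀ) with hRb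
  have hRbPD : Rb.PosDef := by
    rw [hRb, ← hSt]
    exact posDef_mul_mul_transpose hR.inv hFD
  have hW : (Matrix.fromBlocks R 0 (0 : Matrix (Fin m) (Fin m) ℝ) Rb).PosDef :=
    posDef_fromBlocks_diag_s14 hR hRbPD
  set V22 : Matrix (Fin m) (Fin m) ℝ := ((1 - F * D)⁻¹)ᵀ * R * (1 - F * D)⁻¹ with hV22
  have hWinv : (Matrix.fromBlocks R 0 (0 : Matrix (Fin m) (Fin m) ℝ) Rb)⁻¹ =
      Matrix.fromBlocks R⁻¹ 0 0 V22 := by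
    apply Matrix.inv_eq_right_inv
    have e1 : ∀ X : Matrix (Fin m) (Fin m) ℝ,
        (1 - F * D)ᵀ * ((1 - F * D)⁻¹ᵀ * X) = X := fun X => by
      rw [← Matrix.mul_assoc, ← Matrix.transpose_mul, Matrix.nonsing_inv_mul _ hSdet,
        Matrix.transpose_one, Matrix.one_mul]
    have e2 : ∀ X : Matrix (Fin m) (Fin m) ℝ, R⁻¹ * (R * X) = X := fun X => by
      rw [← Matrix.mul_assoc, Matrix.nonsing_inv_mul _ hRdet, Matrix.one_mul]
    have h22 : Rb * V22 = 1 := by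
      rw [hRb, hV22, ← hSt]
      simp only [Matrix.mul_assoc]
      rw [e1, e2, Matrix.mul_nonsing_inv _ hSdet]
    rw [Matrix.fromBlocks_multiply]
    simp only [Matrix.mul_zero, Matrix.zero_mul, add_zero, zero_add,
      Matrix.mul_nonsing_inv _ hRdet, h22]
    exact Matrix.fromBlocks_one
  -- Schur complement of the LMI
  set M' : Matrix (Fin n) (Fin n) ℝ := Q - P * B * F * C - Cᵀ * Fᵀ * Bᵀ * P +
      P * B * (F * D * R⁻¹ + R⁻¹ * Dᵀ * Fᵀ) * Bᵀ * P with hM'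
  set X1 : Matrix (Fin n) (Fin m) ℝ := P * (B * (1 + F * D)) with hX1
  set X2 : Matrix (Fin n) (Fin m) ℝ := Cᵀ * Fᵀ with hX2def
  have hXt : (Matrix.fromCols X1 X2)ᵀ =
      Matrix.fromRows ((B * (1 + F * D))ᵀ * P) (F * C) := by
    rw [Matrix.transpose_fromCols, hX1, hX2def]
    simp only [Matrix.transpose_mul, Matrix.transpose_transpose, Matrix.transpose_add,
      Matrix.transpose_one, hPt, Matrix.mul_assoc]
  have hLMI' : (Matrix.fromBlocks M' (Matrix.fromCols X1 X2)
      (Matrix.fromCols X1 X2)ᵀ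
      (Matrix.fromBlocks R 0 (0 : Matrix (Fin m) (Fin m) ℝ) Rb)).PosDef := by
    rw [hXt]; exact hLMI
  have hSchur := posDef_schur _ _ hW hLMI'
  rw [hWinv, Matrix.transpose_fromCols, Matrix.fromCols_mul_fromBlocks,
    Matrix.fromCols_mul_fromRows] at hSchur
  simp only [Matrix.mul_zero, Matrix.zero_mul, add_zero, zero_add] at hSchur
  -- identify the X2 term
  have hX2term : X2 * V22 * X2ᵀ = Fbᵀ * R * Fb := by
    rw [hX2def, hV22, hFb]
    simp only [Matrix.transpose_mul, Matrix.transpose_transpose, Matrix.mul_assoc]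
  rw [hX2term] at hSchur
  -- the residual positive semidefinite term
  set K : Matrix (Fin n) (Fin m) ℝ := P * B * F * D * R⁻¹ - Fbᵀ with hK
  have hKH : Kᴴ = Kᵀ := by ext i j; simp [Matrix.conjTranspose_apply]
  have hKRK : (K * R * Kᵀ).PosSemidef := by
    have := hR.posSemidef.mul_mul_conjTranspose_same K
    rwa [hKH] at this
  have key : -((A + B * Fb)ᵀ * P + P * (A + B * Fb)) =
      (M' - (X1 * R⁻¹ * X1ᵀ + Fbᵀ * R * Fb)) + K * R * Kᵀ := by
    rw [hM', hX1, hX2def, hK, ← hRiccati]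
    simp only [Matrix.transpose_mul, Matrix.transpose_add, Matrix.transpose_sub,
      Matrix.transpose_one, Matrix.transpose_transpose, hPt, hRt, hRinvT,
      Matrix.mul_add, Matrix.add_mul, Matrix.mul_sub, Matrix.sub_mul,
      Matrix.mul_one, Matrix.one_mul, Matrix.mul_assoc, hFC, hCFt, cR1, cR2,
      Matrix.neg_mul, Matrix.mul_neg, neg_neg]
    abel
  have hfinal : (-((A + B * Fb)ᵀ * P + P * (A + B * Fb))).PosDef := by
    rw [key]
    exact hSchur.add_posSemidef hKRK
  refine ⟨hfinal, lyapunov_hurwitz hP hfinal⟩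
end

section
/- Let A, P be n×n real matrices with P positive definite, B an n×m real matrix, C a p×n real matrix, D a p×m real matrix, F an m×p real matrix with I - FD invertible, and R an m×m real positive definite matrix. Set F̄ = (I - FD)⁻¹FC and suppose the 2×2 block matrix [[(A + BFC)ᵀP + P(A + BFC) + F̄ᵀRF̄, PBFD], [DᵀFᵀBᵀP, -R]] is negative definite. Define Q = -AᵀP - PA + PBR⁻¹BᵀP, N = PB(FDR⁻¹ + R⁻¹DᵀFᵀ)BᵀP, M = Q - PBFC - CᵀFᵀBᵀP + N, B̄ = B(I + FD), and R̄ = (I - FD)R⁻¹(I - DᵀFᵀ). Then the 3×3 block matrix [[M, PB̄, CᵀFᵀ], [B̄ᵀP, R, 0], [FC, 0, R̄]] is positive definite. -/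
open Matrix

set_option linter.unusedSectionVars false

variable {m n : Type*} [Fintype m] [DecidableEq m] [Fintype n] [DecidableEq n]

lemma posDef_mul_mul_transpose_s15 {S N : Matrix n n ℝ} (hN : N.PosDef) (hS : IsUnit S) :
    (S * N * Sᵀ).PosDef := by
  rw [posDef_iff_dotProduct_mulVec]
  constructor
  · have := hN.1
    unfold Matrix.IsHermitian at *
    simp only [conjTranspose_eq_transpose_of_trivial] at this ⊢
    simp [transpose_mul, Matrix.mul_assoc, this]
  · intro x hx
    have hy : Sᵀ *ᵥ x ≠ 0 := by
      intro h
      apply hx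
      have hS' : IsUnit Sᵀ := (Matrix.isUnit_iff_isUnit_det _).mpr
        (by rw [det_transpose]; exact (Matrix.isUnit_iff_isUnit_det _).mp hS)
      exact (Matrix.mulVec_injective_iff_isUnit.mpr hS') (by simp [h])
    have h2 := hN.dotProduct_mulVec_pos hy
    have key : star x ⬝ᵥ (S * N * Sᵀ) *ᵥ x
        = star (Sᵀ *ᵥ x) ⬝ᵥ N *ᵥ (Sᵀ *ᵥ x) := by
      rw [← Matrix.mulVec_mulVec, ← Matrix.mulVec_mulVec, dotProduct_mulVec (star x) S,
        ← Matrix.mulVec_transpose]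
      simp [star_trivial]
    rw [key]; exact h2

lemma posDef_fromBlocks₂₂ (A : Matrix m m ℝ) (B : Matrix m n ℝ) {D : Matrix n n ℝ}
    (hD : D.PosDef) [Invertible D] :
    (fromBlocks A B Bᴴ D).PosDef ↔ (A - B * D⁻¹ * Bᴴ).PosDef := by
  constructor
  · intro h
    rw [posDef_iff_dotProduct_mulVec]
    refine ⟨(Matrix.IsHermitian.fromBlocks₂₂ A B hD.1).mp h.1, fun x hx => ?_⟩
    have hne : (Sum.elim x (-((D⁻¹ * Bᴴ) *ᵥ x)) : m ⊕ n → ℝ) ≠ 0 := by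
      intro hz
      apply hx
      funext i
      have := congrFun hz (Sum.inl i)
      simpa using this
    have h2 := h.dotProduct_mulVec_pos hne
    rw [dotProduct_mulVec,
      Matrix.schur_complement_eq₂₂ A B x (-((D⁻¹ * Bᴴ) *ᵥ x)) hD.1] at h2
    simpa [dotProduct_mulVec] using h2
  · intro h
    rw [posDef_iff_dotProduct_mulVec]
    refine ⟨(Matrix.IsHermitian.fromBlocks₂₂ A B hD.1).mpr h.1, fun z hz => ?_⟩
    have hz' : z = Sum.elim (z ∘ Sum.inl) (z ∘ Sum.inr) := (Sum.elim_comp_inl_inr z).symm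
    rw [dotProduct_mulVec, hz',
      Matrix.schur_complement_eq₂₂ A B (z ∘ Sum.inl) (z ∘ Sum.inr) hD.1]
    by_cases hx : (z ∘ Sum.inl) = 0
    · have hy : (z ∘ Sum.inr) ≠ 0 := by
        intro hy
        apply hz
        funext i
        cases i with
        | inl i => exact congrFun hx i
        | inr i => exact congrFun hy i
      have hw : (D⁻¹ * Bᴴ) *ᵥ (z ∘ Sum.inl) + (z ∘ Sum.inr) ≠ 0 := by
        simpa [hx] using hy
      have h1 := hD.dotProduct_mulVec_pos hw
      have h2 := (posSemidef_iff_dotProduct_mulVec.mp h.posSemidef).2 (z ∘ Sum.inl)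
      rw [dotProduct_mulVec] at h1 h2
      exact add_pos_of_pos_of_nonneg h1 h2
    · have h1 := (posSemidef_iff_dotProduct_mulVec.mp hD.posSemidef).2 ((D⁻¹ * Bᴴ) *ᵥ (z ∘ Sum.inl) + (z ∘ Sum.inr))
      have h2 := h.dotProduct_mulVec_pos hx
      rw [dotProduct_mulVec] at h1 h2
      exact add_pos_of_nonneg_of_pos h1 h2


set_option maxHeartbeats 1000000

/-- **Converse part of Theorem 3.** If the closed-loop block inequality (equation (32)) holds,
then with `Q` defined from the Riccati equation for this `P` and `R`, the paper's 3×3 block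
matrix inequality (equation (26)) is satisfied. -/
theorem closed_loop_block_negdef_implies_feedthrough_lmi {n m p : ℕ}
    (A P : Matrix (Fin n) (Fin n) ℝ) (B : Matrix (Fin n) (Fin m) ℝ)
    (C : Matrix (Fin p) (Fin n) ℝ) (D : Matrix (Fin p) (Fin m) ℝ)
    (F : Matrix (Fin m) (Fin p) ℝ) (R : Matrix (Fin m) (Fin m) ℝ)
    (hP : P.PosDef) (hR : R.PosDef) (hFD : IsUnit (1 - F * D))
    (hNeg :
      letI Fb : Matrix (Fin m) (Fin n) ℝ := (1 - F * D)⁻¹ * (F * C)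
      (-(Matrix.fromBlocks
          ((A + B * F * C)ᵀ * P + P * (A + B * F * C) + Fbᵀ * R * Fb)
          (P * B * F * D) (Dᵀ * Fᵀ * Bᵀ * P) (-R))).PosDef) :
    let Q : Matrix (Fin n) (Fin n) ℝ := -(Aᵀ * P) - P * A + P * B * R⁻¹ * Bᵀ * P
    let N : Matrix (Fin n) (Fin n) ℝ := P * B * (F * D * R⁻¹ + R⁻¹ * Dᵀ * Fᵀ) * Bᵀ * P
    let M : Matrix (Fin n) (Fin n) ℝ := Q - P * B * F * C - Cᵀ * Fᵀ * Bᵀ * P + N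
    let Bb : Matrix (Fin n) (Fin m) ℝ := B * (1 + F * D)
    let Rb : Matrix (Fin m) (Fin m) ℝ := (1 - F * D) * R⁻¹ * (1 - Dᵀ * Fᵀ)
    (fromBlocks3 M (P * Bb) (Cᵀ * Fᵀ) (Bbᵀ * P) R 0 (F * C) 0 Rb).PosDef := by
  intro Q N M Bb Rb
  have hPt : Pᵀ = P := hP.1
  have hRdet : IsUnit R.det := hR.det_pos.ne'.isUnit
  haveI : Invertible R := R.invertibleOfIsUnitDet hRdet
  have hSdet : IsUnit (1 - F * D).det := (Matrix.isUnit_iff_isUnit_det _).mp hFD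
  have hSTt : (1 - F * D)ᵀ = 1 - Dᵀ * Fᵀ := by
    simp [transpose_sub, transpose_mul]
  have hRbeq : Rb = (1 - F * D) * R⁻¹ * (1 - F * D)ᵀ := by rw [hSTt]
  have hRb : Rb.PosDef := by rw [hRbeq]; exact posDef_mul_mul_transpose_s15 hR.inv hFD
  have hRbdet : IsUnit Rb.det := hRb.det_pos.ne'.isUnit
  haveI : Invertible Rb := Rb.invertibleOfIsUnitDet hRbdet
  -- the lower-right 2x2 block
  have hD₂ : (Matrix.fromBlocks R (0 : Matrix (Fin m) (Fin m) ℝ) 0 Rb).PosDef := by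
    have h := (posDef_fromBlocks₂₂ R (0 : Matrix (Fin m) (Fin m) ℝ) hRb).mpr
      (by simpa using hR)
    simpa using h
  have hD₂det : IsUnit (Matrix.fromBlocks R (0 : Matrix (Fin m) (Fin m) ℝ) 0 Rb).det :=
    hD₂.det_pos.ne'.isUnit
  haveI : Invertible (Matrix.fromBlocks R (0 : Matrix (Fin m) (Fin m) ℝ) 0 Rb) :=
    Matrix.invertibleOfIsUnitDet _ hD₂det
  have hD₂inv : (Matrix.fromBlocks R (0 : Matrix (Fin m) (Fin m) ℝ) 0 Rb)⁻¹
      = Matrix.fromBlocks R⁻¹ 0 0 Rb⁻¹ := by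
    apply Matrix.inv_eq_right_inv
    simp [Matrix.fromBlocks_multiply, Matrix.mul_nonsing_inv _ hRdet,
      Matrix.mul_nonsing_inv _ hRbdet, Matrix.fromBlocks_one]
  -- rewrite goal as 2x2 block matrix with conjugate-transpose corner
  have hrows : Matrix.fromRows (Bbᵀ * P) (F * C)
      = (Matrix.fromCols (P * Bb) (Cᵀ * Fᵀ))ᴴ := by
    simp [conjTranspose_eq_transpose_of_trivial, transpose_fromCols, transpose_mul, hPt]
  unfold fromBlocks3
  rw [hrows, posDef_fromBlocks₂₂ _ _ hD₂, hD₂inv]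
  rw [conjTranspose_eq_transpose_of_trivial, transpose_fromCols,
    Matrix.fromCols_mul_fromBlocks, Matrix.fromCols_mul_fromRows]
  -- process the hypothesis via Schur complement
  have hc : (Dᵀ * Fᵀ * Bᵀ * P) = (P * B * F * D)ᴴ := by
    simp [conjTranspose_eq_transpose_of_trivial, transpose_mul, hPt, Matrix.mul_assoc]
  rw [hc, Matrix.fromBlocks_neg, ← conjTranspose_neg, neg_neg,
    posDef_fromBlocks₂₂ _ _ hR] at hNeg
  have hRbinv : Rb⁻¹ = ((1 - F * D)ᵀ)⁻¹ * (R * (1 - F * D)⁻¹) := by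
    rw [hRbeq, Matrix.mul_inv_rev, Matrix.mul_inv_rev, Matrix.nonsing_inv_nonsing_inv R hRdet]
  have hX : Cᵀ * Fᵀ * Rb⁻¹ * (Cᵀ * Fᵀ)ᵀ
      = ((1 - F * D)⁻¹ * (F * C))ᵀ * R * ((1 - F * D)⁻¹ * (F * C)) := by
    rw [hRbinv]
    simp [transpose_mul, transpose_transpose, Matrix.transpose_nonsing_inv, Matrix.mul_assoc]
  have key : M - ((P * Bb * R⁻¹ + Cᵀ * Fᵀ * (0 : Matrix (Fin m) (Fin m) ℝ)) * (P * Bb)ᵀ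
        + (P * Bb * (0 : Matrix (Fin m) (Fin m) ℝ) + Cᵀ * Fᵀ * Rb⁻¹) * (Cᵀ * Fᵀ)ᵀ)
      = -((A + B * F * C)ᵀ * P + P * (A + B * F * C)
          + ((1 - F * D)⁻¹ * (F * C))ᵀ * R * ((1 - F * D)⁻¹ * (F * C)))
        - -(P * B * F * D) * R⁻¹ * (-(P * B * F * D))ᴴ := by
    simp only [Matrix.mul_zero, add_zero, zero_add, hX]
    simp only [M, Q, N, Bb, conjTranspose_eq_transpose_of_trivial, transpose_neg, transpose_mul,
      transpose_add, transpose_one, transpose_sub, transpose_transpose, hPt,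
      Matrix.transpose_nonsing_inv]
    simp only [Matrix.mul_add, Matrix.add_mul, Matrix.sub_mul, Matrix.mul_sub, Matrix.mul_one,
      Matrix.one_mul, Matrix.mul_assoc, Matrix.neg_mul, Matrix.mul_neg, neg_neg,
      sub_eq_add_neg, neg_add]
    abel
  rw [key]
  exact hNeg
end
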